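/- For the 2x2 case (λ_t = 1 exactly for two periods ℓ' < s ≤ ℓ), the pairwise matched 2WFE estimator reduces to τ̂(w^s,λ) = (1/N_s) Σ_i [1(t_i*=s) − 1(t_i*=∞)K_M(i,s)/M]·(Y_{iℓ} − Y_{iℓ'}). -/

import Mathlib

open Finset

noncomputable section

/-- Treatment indicator `D_{it} = 1(t ≥ t_i*)`. -/
def Dit {n : ℕ} (tstar : Fin n → ℕ∞) (i : Fin n) (t : ℕ) : ℝ :=
  if tstar i ≤ (t : ℕ∞) then 1 else 0

/-- Unit-level λ-weighted mean of treatment: `D̄_i`. -/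
def DbarI {n : ℕ} (T : ℕ) (lam : ℕ → ℝ) (tstar : Fin n → ℕ∞) (i : Fin n) : ℝ :=
  (∑ t ∈ Finset.Icc 1 T, lam t * Dit tstar i t) / (∑ t ∈ Finset.Icc 1 T, lam t)

/-- Period-level w-weighted mean of treatment: `D̃_t`. -/
def DtildeT {n : ℕ} (w : Fin n → ℝ) (tstar : Fin n → ℕ∞) (t : ℕ) : ℝ :=
  (∑ i, w i * Dit tstar i t) / (∑ i, w i)

/-- Overall weighted mean of treatment: `D̄`. -/
def Dbar {n : ℕ} (T : ℕ) (w : Fin n → ℝ) (lam : ℕ → ℝ) (tstar : Fin n → ℕ∞) : ℝ :=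
  (∑ i, ∑ t ∈ Finset.Icc 1 T, w i * lam t * Dit tstar i t) /
    ((∑ i, w i) * (∑ t ∈ Finset.Icc 1 T, lam t))

/-- Demeaned treatment `D̈_{it} = D_{it} − D̄_i − D̃_t + D̄`. -/
def Ddot {n : ℕ} (T : ℕ) (w : Fin n → ℝ) (lam : ℕ → ℝ) (tstar : Fin n → ℕ∞)
    (i : Fin n) (t : ℕ) : ℝ :=
  Dit tstar i t - DbarI T lam tstar i - DtildeT w tstar t + Dbar T w lam tstar

/-- Weighted cohort share `p̂_c^w` (cohort `c ∈ ℕ∞`, with `⊤` the never treated). -/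
def phat {n : ℕ} (w : Fin n → ℝ) (tstar : Fin n → ℕ∞) (c : ℕ∞) : ℝ :=
  (∑ i, w i * (if tstar i = c then 1 else 0)) / (∑ i, w i)

/-- Share of included periods `t ≥ u`: `Λ_u`. -/
def Lam (T : ℕ) (lam : ℕ → ℝ) (u : ℕ) : ℝ :=
  (∑ t ∈ Finset.Icc 1 T, lam t * (if u ≤ t then 1 else 0)) / (∑ t ∈ Finset.Icc 1 T, lam t)

/-- Weighted two-way fixed effects estimator `τ̂(w, λ)`. -/
def tauhat {n : ℕ} (T : ℕ) (w : Fin n → ℝ) (lam : ℕ → ℝ) (tstar : Fin n → ℕ∞)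
    (Y : Fin n → ℕ → ℝ) : ℝ :=
  (∑ i, ∑ t ∈ Finset.Icc 1 T, w i * lam t * Y i t * Ddot T w lam tstar i t) /
    (∑ i, ∑ t ∈ Finset.Icc 1 T, w i * lam t * Dit tstar i t * Ddot T w lam tstar i t)

end

/-!
With only the periods `ℓ' < ℓ` weighted, unit demeaning forces `D̈_{iℓ'} = -D̈_{iℓ}`, so the
2WFE estimator is a ratio of first differences weighted by `w_i D̈_{iℓ}`, where
`D̈_{iℓ} = (ΔD_i - ΔD̃) / 2`. Only cohort `s` switches treatment between `ℓ'` and `ℓ`, and the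
matching condition `Σ K_M(i,s) = N_s M` makes the total weight `2 N_s`, so `ΔD̃ = 1/2` and
`w_i D̈_{iℓ}` is a quarter of the contrast `1(t_i* = s) - 1(t_i* = ∞) K_M(i,s) / M`.
-/

def pairWeight (a b t : ℕ) : ℝ :=
  if t = a ∨ t = b then 1 else 0

theorem sum_pairWeight_mul {S : Finset ℕ} {a b : ℕ} (ha : a ∈ S) (hb : b ∈ S) (hab : a ≠ b)
    (f : ℕ → ℝ) : ∑ t ∈ S, pairWeight a b t * f t = f a + f b := by
  have hfilter : S.filter (fun t => t = a ∨ t = b) = {a, b} := by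
    ext t; simp only [mem_filter, mem_insert, mem_singleton]
    constructor
    · exact fun h => h.2
    · rintro (rfl | rfl) <;> simp [ha, hb]
  simp only [pairWeight, ite_mul, one_mul, zero_mul]
  rw [← sum_filter, hfilter, sum_pair hab]

section TwoPeriod

variable {n T a b : ℕ} (w : Fin n → ℝ) (tstar : Fin n → ℕ∞)

theorem sum_pairWeight (ha : a ∈ Icc 1 T) (hb : b ∈ Icc 1 T) (hab : a ≠ b) :
    ∑ t ∈ Icc 1 T, pairWeight a b t = 2 := by
  simpa [one_add_one_eq_two] using sum_pairWeight_mul ha hb hab (fun _ => 1)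

theorem DbarI_pairWeight (ha : a ∈ Icc 1 T) (hb : b ∈ Icc 1 T) (hab : a ≠ b) (i : Fin n) :
    DbarI T (pairWeight a b) tstar i = (Dit tstar i a + Dit tstar i b) / 2 := by
  rw [DbarI, sum_pairWeight_mul ha hb hab, sum_pairWeight ha hb hab]

theorem Dbar_pairWeight (ha : a ∈ Icc 1 T) (hb : b ∈ Icc 1 T) (hab : a ≠ b)
    (hw : ∑ i, w i ≠ 0) :
    Dbar T w (pairWeight a b) tstar = (DtildeT w tstar a + DtildeT w tstar b) / 2 := by
  have hrow (i : Fin n) : ∑ t ∈ Icc 1 T, w i * pairWeight a b t * Dit tstar i t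
      = w i * Dit tstar i a + w i * Dit tstar i b := by
    simp_rw [mul_comm (w i) (pairWeight a b _), mul_assoc]
    exact sum_pairWeight_mul ha hb hab _
  simp only [Dbar, DtildeT, hrow, sum_add_distrib, sum_pairWeight ha hb hab]
  field_simp

theorem Ddot_pairWeight_snd (ha : a ∈ Icc 1 T) (hb : b ∈ Icc 1 T) (hab : a ≠ b)
    (hw : ∑ i, w i ≠ 0) (i : Fin n) :
    Ddot T w (pairWeight a b) tstar i b
      = ((Dit tstar i b - Dit tstar i a) - (DtildeT w tstar b - DtildeT w tstar a)) / 2 := by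
  rw [Ddot, DbarI_pairWeight tstar ha hb hab, Dbar_pairWeight w tstar ha hb hab hw]
  ring

theorem Ddot_pairWeight_fst (ha : a ∈ Icc 1 T) (hb : b ∈ Icc 1 T) (hab : a ≠ b)
    (hw : ∑ i, w i ≠ 0) (i : Fin n) :
    Ddot T w (pairWeight a b) tstar i a = -Ddot T w (pairWeight a b) tstar i b := by
  simp only [Ddot, DbarI_pairWeight tstar ha hb hab, Dbar_pairWeight w tstar ha hb hab hw]
  ring

theorem sum_mul_Ddot_pairWeight (ha : a ∈ Icc 1 T) (hb : b ∈ Icc 1 T) (hab : a ≠ b)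
    (hw : ∑ i, w i ≠ 0) (Z : Fin n → ℕ → ℝ) :
    ∑ i, ∑ t ∈ Icc 1 T, w i * pairWeight a b t * Z i t * Ddot T w (pairWeight a b) tstar i t
      = ∑ i, w i * Ddot T w (pairWeight a b) tstar i b * (Z i b - Z i a) := by
  refine sum_congr rfl fun i _ => ?_
  have hrow : ∑ t ∈ Icc 1 T, w i * pairWeight a b t * Z i t * Ddot T w (pairWeight a b) tstar i t
      = ∑ t ∈ Icc 1 T, pairWeight a b t * (w i * Z i t * Ddot T w (pairWeight a b) tstar i t) :=
    sum_congr rfl fun t _ => by ring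
  rw [hrow, sum_pairWeight_mul ha hb hab, Ddot_pairWeight_fst w tstar ha hb hab hw]
  ring

theorem tauhat_pairWeight (ha : a ∈ Icc 1 T) (hb : b ∈ Icc 1 T) (hab : a ≠ b)
    (hw : ∑ i, w i ≠ 0) (Y : Fin n → ℕ → ℝ) :
    tauhat T w (pairWeight a b) tstar Y
      = (∑ i, w i * Ddot T w (pairWeight a b) tstar i b * (Y i b - Y i a))
        / ∑ i, w i * Ddot T w (pairWeight a b) tstar i b * (Dit tstar i b - Dit tstar i a) := by
  rw [tauhat, sum_mul_Ddot_pairWeight w tstar ha hb hab hw,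
    sum_mul_Ddot_pairWeight w tstar ha hb hab hw (fun i t => Dit tstar i t)]

end TwoPeriod

section Matched

variable {n : ℕ} (tstar : Fin n → ℕ∞) (K : Fin n → ℕ) (M s : ℕ)

noncomputable def matchedWeight (i : Fin n) : ℝ :=
  (if tstar i = (s : ℕ∞) then 1 else 0) + (if tstar i = ⊤ then (K i : ℝ) / M else 0)

noncomputable def matchedContrast (i : Fin n) : ℝ :=
  (if tstar i = (s : ℕ∞) then 1 else 0) - (if tstar i = ⊤ then (K i : ℝ) / M else 0)

variable {tstar K M s}

theorem Dit_sub_of_eq_coe {a b : ℕ} {i : Fin n} (hi : tstar i = (s : ℕ∞)) (has : a < s)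
    (hsb : s ≤ b) : Dit tstar i b - Dit tstar i a = 1 := by
  simp [Dit, hi, hsb, not_le.mpr has]

theorem Dit_of_eq_top {i : Fin n} (hi : tstar i = ⊤) (t : ℕ) : Dit tstar i t = 0 := by
  simp [Dit, hi]

theorem matchedWeight_mul_Dit_sub {a b : ℕ} (has : a < s) (hsb : s ≤ b) (i : Fin n) :
    matchedWeight tstar K M s i * (Dit tstar i b - Dit tstar i a)
      = if tstar i = (s : ℕ∞) then 1 else 0 := by
  by_cases hs : tstar i = (s : ℕ∞)
  · simp [matchedWeight, hs, Dit_sub_of_eq_coe hs has hsb]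
  by_cases htop : tstar i = ⊤
  · simp [matchedWeight, htop, Dit_of_eq_top htop]
  · simp [matchedWeight, hs, htop]

theorem matchedContrast_mul_Dit_sub {a b : ℕ} (has : a < s) (hsb : s ≤ b) (i : Fin n) :
    matchedContrast tstar K M s i * (Dit tstar i b - Dit tstar i a)
      = if tstar i = (s : ℕ∞) then 1 else 0 := by
  by_cases hs : tstar i = (s : ℕ∞)
  · simp [matchedContrast, hs, Dit_sub_of_eq_coe hs has hsb]
  by_cases htop : tstar i = ⊤
  · simp [matchedContrast, htop, Dit_of_eq_top htop]
  · simp [matchedContrast, hs, htop]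

theorem sum_matchedWeight (hM : M ≠ 0)
    (hK : (∑ i, if tstar i = ⊤ then K i else 0)
      = (univ.filter (fun i => tstar i = (s : ℕ∞))).card * M) :
    ∑ i, matchedWeight tstar K M s i = 2 * (univ.filter (fun i => tstar i = (s : ℕ∞))).card := by
  have hcontrol : ∑ i, (if tstar i = ⊤ then (K i : ℝ) / M else 0)
      = (univ.filter (fun i => tstar i = (s : ℕ∞))).card := by
    have hK' := congrArg (fun k : ℕ => (k : ℝ) / M) hK
    simp only [Nat.cast_sum, Nat.cast_ite, Nat.cast_zero, Nat.cast_mul, sum_div, ite_div,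
      zero_div] at hK'
    rw [hK']
    field_simp
  simp only [matchedWeight, sum_add_distrib, sum_boole, hcontrol]
  ring

theorem sum_matchedWeight_ne_zero (hM : M ≠ 0)
    (hNs : 0 < (univ.filter (fun i => tstar i = (s : ℕ∞))).card)
    (hK : (∑ i, if tstar i = ⊤ then K i else 0)
      = (univ.filter (fun i => tstar i = (s : ℕ∞))).card * M) :
    ∑ i, matchedWeight tstar K M s i ≠ 0 := by
  rw [sum_matchedWeight hM hK]
  positivity

theorem DtildeT_matchedWeight_sub {a b : ℕ} (has : a < s) (hsb : s ≤ b) (hM : M ≠ 0)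
    (hNs : 0 < (univ.filter (fun i => tstar i = (s : ℕ∞))).card)
    (hK : (∑ i, if tstar i = ⊤ then K i else 0)
      = (univ.filter (fun i => tstar i = (s : ℕ∞))).card * M) :
    DtildeT (matchedWeight tstar K M s) tstar b - DtildeT (matchedWeight tstar K M s) tstar a
      = 1 / 2 := by
  rw [DtildeT, DtildeT, ← sub_div, ← sum_sub_distrib]
  simp only [← mul_sub, matchedWeight_mul_Dit_sub has hsb, sum_boole, sum_matchedWeight hM hK]
  field_simp

theorem matchedWeight_mul_Ddot {T a b : ℕ} (ha : a ∈ Icc 1 T) (hb : b ∈ Icc 1 T)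
    (has : a < s) (hsb : s ≤ b) (hM : M ≠ 0)
    (hNs : 0 < (univ.filter (fun i => tstar i = (s : ℕ∞))).card)
    (hK : (∑ i, if tstar i = ⊤ then K i else 0)
      = (univ.filter (fun i => tstar i = (s : ℕ∞))).card * M) (i : Fin n) :
    matchedWeight tstar K M s i * Ddot T (matchedWeight tstar K M s) (pairWeight a b) tstar i b
      = matchedContrast tstar K M s i / 4 := by
  rw [Ddot_pairWeight_snd _ tstar ha hb (by omega) (sum_matchedWeight_ne_zero hM hNs hK),
    DtildeT_matchedWeight_sub has hsb hM hNs hK, mul_div_assoc', mul_sub,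
    matchedWeight_mul_Dit_sub has hsb, matchedWeight, matchedContrast]
  ring

end Matched

theorem statement8_general {n T : ℕ} (s M ℓ ℓ' : ℕ) (tstar : Fin n → ℕ∞)
    (Y : Fin n → ℕ → ℝ) (K : Fin n → ℕ)
    (hM : 1 ≤ M)
    (hℓ'1 : 1 ≤ ℓ') (hℓ's : ℓ' < s) (hsℓ : s ≤ ℓ) (hℓT : ℓ ≤ T)
    (hNs : 0 < (Finset.univ.filter (fun i => tstar i = (s : ℕ∞))).card)
    (hK : (∑ i, if tstar i = ⊤ then K i else 0)
      = (Finset.univ.filter (fun i => tstar i = (s : ℕ∞))).card * M) :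
    tauhat T
        (fun i => (if tstar i = (s : ℕ∞) then (1 : ℝ) else 0)
          + (if tstar i = ⊤ then (K i : ℝ) / M else 0))
        (fun t => if t = ℓ' ∨ t = ℓ then (1 : ℝ) else 0) tstar Y
      = (1 / ((Finset.univ.filter (fun i => tstar i = (s : ℕ∞))).card : ℝ)) *
          ∑ i, ((if tstar i = (s : ℕ∞) then (1 : ℝ) else 0)
              - (if tstar i = ⊤ then (K i : ℝ) / M else 0)) * (Y i ℓ - Y i ℓ') := by
  have hℓ' : ℓ' ∈ Icc 1 T := mem_Icc.mpr ⟨hℓ'1, by omega⟩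
  have hℓ : ℓ ∈ Icc 1 T := mem_Icc.mpr ⟨by omega, hℓT⟩
  have hM0 : M ≠ 0 := by omega
  change tauhat T (matchedWeight tstar K M s) (pairWeight ℓ' ℓ) tstar Y
    = _ * ∑ i, matchedContrast tstar K M s i * (Y i ℓ - Y i ℓ')
  rw [tauhat_pairWeight _ tstar hℓ' hℓ (by omega) (sum_matchedWeight_ne_zero hM0 hNs hK)]
  simp only [matchedWeight_mul_Ddot hℓ' hℓ hℓ's hsℓ hM0 hNs hK, div_mul_eq_mul_div, ← sum_div,
    matchedContrast_mul_Dit_sub hℓ's hsℓ, sum_boole]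
  field_simp

/-- In the 2x2 case, where `λ_t = 1` exactly for two periods
`ℓ' < s ≤ ℓ`, the pairwise matched 2WFE estimator reduces to
`(1/N_s) Σ_i [1(t_i*=s) − 1(t_i*=∞) K_M(i,s)/M]·(Y_{iℓ} − Y_{iℓ'})`. -/
theorem statement8 {n T : ℕ} (s M ℓ ℓ' : ℕ) (tstar : Fin n → ℕ∞)
    (Y : Fin n → ℕ → ℝ) (K : Fin n → ℕ)
    (hs : s ∈ Finset.Icc 2 T) (hM : 1 ≤ M)
    (hℓ'1 : 1 ≤ ℓ') (hℓ's : ℓ' < s) (hsℓ : s ≤ ℓ) (hℓT : ℓ ≤ T)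
    (hNs : 0 < (Finset.univ.filter (fun i => tstar i = (s : ℕ∞))).card)
    (hK : (∑ i, if tstar i = ⊤ then K i else 0)
      = (Finset.univ.filter (fun i => tstar i = (s : ℕ∞))).card * M) :
    tauhat T
        (fun i => (if tstar i = (s : ℕ∞) then (1 : ℝ) else 0)
          + (if tstar i = ⊤ then (K i : ℝ) / M else 0))
        (fun t => if t = ℓ' ∨ t = ℓ then (1 : ℝ) else 0) tstar Y
      = (1 / ((Finset.univ.filter (fun i => tstar i = (s : ℕ∞))).card : ℝ)) *
          ∑ i, ((if tstar i = (s : ℕ∞) then (1 : ℝ) else 0)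
              - (if tstar i = ⊤ then (K i : ℝ) / M else 0)) * (Y i ℓ - Y i ℓ') :=
  statement8_general s M ℓ ℓ' tstar Y K hM hℓ'1 hℓ's hsℓ hℓT hNs hK
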